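/- arXiv:1001.1238 — 3 statements merged into one kernel-verified Lean document; each statement's English description precedes it below -/
import Mathlib

section
/- If μ₂ is a measure on iℝ with density dμ₂/|dz| ≤ a/π (a > 0), then the function x ↦ -a√x - U^{μ₂}(√x) is convex on (0,∞); consequently, if additionally x ↦ V(√x) is convex on (0,∞), then x ↦ V(√x) - a√x - U^{μ₂}(√x) is convex on (0,∞). -/
/-!
Put `c = a / π`. Since `∫ (log (x + y²) - log (1 + y²)) dy = 2π(√x - 1)`, the function
`-a√x + ½ ∫ log (x + y²) dμ₂(y)` equals, up to an additive constant,
`-½ ∫ (log (x + y²) - log (1 + y²)) d(c • volume - μ₂)(y)`. Each `x ↦ log (x + y²)` is concave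
and `c • volume - μ₂` is a positive measure, so this integral is concave in `x`.
-/

open MeasureTheory Real Set Filter Topology

lemma abs_log_sub_log_le {A B : ℝ} (hA : 0 < A) (hB : 0 < B) :
    |log A - log B| ≤ |A - B| / min A B := by
  have one_sided : ∀ {P Q : ℝ}, 0 < P → 0 < Q → log P - log Q ≤ |P - Q| / Q := by
    intro P Q hP hQ
    calc log P - log Q = log (P / Q) := (log_div hP.ne' hQ.ne').symm
      _ ≤ P / Q - 1 := log_le_sub_one_of_pos (div_pos hP hQ)
      _ = (P - Q) / Q := by field_simp
      _ ≤ |P - Q| / Q := by gcongr; exact le_abs_self _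
  have hm : 0 < min A B := lt_min hA hB
  rw [abs_le]
  constructor
  · have := (one_sided hB hA).trans (div_le_div_of_nonneg_left (abs_nonneg _) hm (min_le_left A B))
    rw [abs_sub_comm] at this
    linarith
  · exact (one_sided hA hB).trans (div_le_div_of_nonneg_left (abs_nonneg _) hm (min_le_right A B))

lemma abs_log_add_sq_sub_log_one_add_sq_le {p : ℝ} (hp : 0 < p) (u : ℝ) :
    |log (p + u ^ 2) - log (1 + u ^ 2)| ≤ |p - 1| / min p 1 * (1 + u ^ 2)⁻¹ := by
  have hmin : min p 1 * (1 + u ^ 2) ≤ min (p + u ^ 2) (1 + u ^ 2) := by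
    apply le_min <;> nlinarith [min_le_left p 1, min_le_right p 1, sq_nonneg u]
  calc |log (p + u ^ 2) - log (1 + u ^ 2)|
      ≤ |(p + u ^ 2) - (1 + u ^ 2)| / min (p + u ^ 2) (1 + u ^ 2) :=
        abs_log_sub_log_le (by positivity) (by positivity)
    _ ≤ |p - 1| / (min p 1 * (1 + u ^ 2)) := by
        rw [add_sub_add_right_eq_sub]; gcongr
    _ = |p - 1| / min p 1 * (1 + u ^ 2)⁻¹ := by rw [← div_div, div_eq_mul_inv]

lemma integrable_log_add_sq_sub_log_one_add_sq {p : ℝ} (hp : 0 < p) :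
    Integrable fun u : ℝ => log (p + u ^ 2) - log (1 + u ^ 2) := by
  refine (integrable_inv_one_add_sq.const_mul (|p - 1| / min p 1)).mono' (by fun_prop)
    (ae_of_all _ fun u => ?_)
  simpa only [norm_eq_abs] using abs_log_add_sq_sub_log_one_add_sq_le hp u

lemma tendsto_mul_log_add_sq_sub_log_one_add_sq_atTop {p : ℝ} (hp : 0 < p) :
    Tendsto (fun u : ℝ => u * (log (p + u ^ 2) - log (1 + u ^ 2))) atTop (𝓝 0) := by
  set C := |p - 1| / min p 1
  rw [tendsto_zero_iff_abs_tendsto_zero]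
  refine squeeze_zero' (Eventually.of_forall fun u => abs_nonneg _) ?_
    (tendsto_const_nhds.div_atTop tendsto_id : Tendsto (fun u : ℝ => C / u) atTop (𝓝 0))
  filter_upwards [eventually_gt_atTop (0 : ℝ)] with u hu
  have hC : 0 ≤ C := by positivity
  calc |u * (log (p + u ^ 2) - log (1 + u ^ 2))|
      ≤ u * (C * (1 + u ^ 2)⁻¹) := by
        rw [abs_mul, abs_of_pos hu]
        exact mul_le_mul_of_nonneg_left (abs_log_add_sq_sub_log_one_add_sq_le hp u) hu.le
    _ ≤ C / u := by
        rw [← div_eq_mul_inv, mul_div_assoc', div_le_div_iff₀ (by positivity) hu]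
        nlinarith [mul_nonneg hC (sq_nonneg u)]

lemma hasDerivAt_antideriv_log_add_sq_sub_log_one_add_sq {p : ℝ} (hp : 0 < p) (u : ℝ) :
    HasDerivAt (fun u => u * (log (p + u ^ 2) - log (1 + u ^ 2))
        + 2 * (√p * arctan (u / √p) - arctan u))
      (log (p + u ^ 2) - log (1 + u ^ 2)) u := by
  have hsq : HasDerivAt (fun u : ℝ => u ^ 2) (2 * u) u := by simpa using hasDerivAt_pow 2 u
  have hlog : ∀ q : ℝ, 0 < q → HasDerivAt (fun u => log (q + u ^ 2)) (2 * u / (q + u ^ 2)) u :=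
    fun q hq => (hsq.const_add q).log (by positivity)
  have harctan : HasDerivAt (fun u => arctan (u / √p)) (1 / (1 + (u / √p) ^ 2) * (1 / √p)) u :=
    (hasDerivAt_arctan _).comp u ((hasDerivAt_id u).div_const _)
  refine (((hasDerivAt_id u).mul ((hlog p hp).sub (hlog 1 one_pos))).add
    (((harctan.const_mul √p).sub (hasDerivAt_arctan u)).const_mul 2)).congr_deriv ?_
  simp only [id_eq, Pi.sub_apply]
  rw [div_pow, sq_sqrt hp.le]
  field_simp
  ring

lemma integral_log_add_sq_sub_log_one_add_sq {p : ℝ} (hp : 0 < p) :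
    ∫ u, (log (p + u ^ 2) - log (1 + u ^ 2)) = 2 * π * (√p - 1) := by
  set F : ℝ → ℝ := fun u => u * (log (p + u ^ 2) - log (1 + u ^ 2))
      + 2 * (√p * arctan (u / √p) - arctan u)
  have hs : 0 < √p := sqrt_pos.2 hp
  have harctan : Tendsto arctan atTop (𝓝 (π / 2)) :=
    tendsto_nhds_of_tendsto_nhdsWithin tendsto_arctan_atTop
  have htop : Tendsto F atTop (𝓝 (π * (√p - 1))) := by
    rw [show π * (√p - 1) = 0 + 2 * (√p * (π / 2) - π / 2) by ring]
    exact (tendsto_mul_log_add_sq_sub_log_one_add_sq_atTop hp).add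
      ((((harctan.comp (tendsto_id.atTop_div_const hs)).const_mul √p).sub harctan).const_mul 2)
  have hodd : ∀ u, F (-u) = -F u := fun u => by
    simp only [F, neg_sq, neg_div, arctan_neg]
    ring
  have hbot : Tendsto F atBot (𝓝 (-(π * (√p - 1)))) :=
    (htop.comp tendsto_neg_atBot_atTop).neg.congr fun u => by simp [hodd]
  rw [integral_of_hasDerivAt_of_tendsto (hasDerivAt_antideriv_log_add_sq_sub_log_one_add_sq hp)
    (integrable_log_add_sq_sub_log_one_add_sq hp) hbot htop]
  ring

theorem concaveOn_integral_sub_integral_of_le {E α : Type*} [AddCommGroup E] [Module ℝ E]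
    [MeasurableSpace α] {μ ν : Measure α} {s : Set E} {g : E → α → ℝ} (hs : Convex ℝ s)
    (hμν : μ ≤ ν) (hg : ∀ u, ConcaveOn ℝ s (g · u)) (hint : ∀ x ∈ s, Integrable (g x) ν) :
    ConcaveOn ℝ s fun x => ∫ u, g x u ∂ν - ∫ u, g x u ∂μ := by
  refine ⟨hs, fun x hx y hy t r ht hr htr => ?_⟩
  set z := t • x + r • y
  have hz : z ∈ s := hs hx hy ht hr htr
  set defect : α → ℝ := fun u => g z u - (t * g x u + r * g y u)
  have integral_defect : ∀ m : Measure α, m ≤ ν →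
      ∫ u, defect u ∂m = ∫ u, g z u ∂m - (t * ∫ u, g x u ∂m + r * ∫ u, g y u ∂m) := by
    intro m hm
    have hint_m : ∀ w ∈ s, Integrable (g w) m := fun w hw => (hint w hw).mono_measure hm
    have hcomb : Integrable (fun u => t * g x u + r * g y u) m :=
      ((hint_m x hx).const_mul t).add ((hint_m y hy).const_mul r)
    rw [integral_sub (hint_m z hz) hcomb, integral_add ((hint_m x hx).const_mul t)
      ((hint_m y hy).const_mul r), integral_const_mul, integral_const_mul]
  have hdefect : ∫ u, defect u ∂μ ≤ ∫ u, defect u ∂ν :=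
    integral_mono_measure hμν (ae_of_all _ fun u => sub_nonneg.2 ((hg u).2 hx hy ht hr htr))
      ((hint z hz).sub (((hint x hx).const_mul t).add ((hint y hy).const_mul r)))
  rw [integral_defect μ hμν, integral_defect ν le_rfl] at hdefect
  simp only [smul_eq_mul]
  linarith

lemma concaveOn_log_add_sq_sub_log_one_add_sq (u : ℝ) :
    ConcaveOn ℝ (Ioi 0) fun x => log (x + u ^ 2) - log (1 + u ^ 2) := by
  have h := strictConcaveOn_log_Ioi.concaveOn.translate_left (u ^ 2)
  refine (h.subset (fun x hx => ?_) (convex_Ioi 0)).add_const _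
  simp only [mem_preimage, mem_Ioi] at hx ⊢
  positivity

theorem convexOn_neg_mul_sqrt_add_integral_log {a : ℝ} (ha : 0 ≤ a) {μ : Measure ℝ}
    (hμ : μ ≤ ENNReal.ofReal (a / π) • volume)
    (hint : ∀ x : ℝ, 0 < x → Integrable (fun y => log (x + y ^ 2)) μ) :
    ConvexOn ℝ (Ioi 0) fun x => -a * √x + (1 / 2) * ∫ y, log (x + y ^ 2) ∂μ := by
  have hconc := concaveOn_integral_sub_integral_of_le (convex_Ioi 0) hμ
    concaveOn_log_add_sq_sub_log_one_add_sq
    fun x hx => (integrable_log_add_sq_sub_log_one_add_sq hx).smul_measure ENNReal.ofReal_ne_top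
  refine ((hconc.neg.smul (by norm_num : (0 : ℝ) ≤ 1 / 2)).add_const
    (-a + (1 / 2) * ∫ y, log (1 + y ^ 2) ∂μ)).congr fun x (hx : 0 < x) => ?_
  simp only [Pi.add_apply, Pi.neg_apply, smul_eq_mul]
  rw [integral_smul_measure, integral_log_add_sq_sub_log_one_add_sq hx,
    integral_sub (hint x hx) (hint 1 one_pos), ENNReal.toReal_ofReal (by positivity), smul_eq_mul]
  field_simp
  ring

theorem external_field_convex_general (a : ℝ) (ha : 0 < a)
    (μ₂ : Measure ℝ)
    (hdens : μ₂ ≤ ENNReal.ofReal (a / π) • volume)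
    (hint : ∀ x : ℝ, 0 < x → Integrable (fun y => Real.log (x + y ^ 2)) μ₂)
    (V : ℝ → ℝ) :
    ConvexOn ℝ (Set.Ioi 0)
      (fun x => -a * Real.sqrt x + (1 / 2) * ∫ y, Real.log (x + y ^ 2) ∂μ₂)
    ∧ (ConvexOn ℝ (Set.Ioi 0) (fun x => V (Real.sqrt x)) →
        ConvexOn ℝ (Set.Ioi 0)
          (fun x => V (Real.sqrt x) - a * Real.sqrt x
              + (1 / 2) * ∫ y, Real.log (x + y ^ 2) ∂μ₂)) := by
  have hconv := convexOn_neg_mul_sqrt_add_integral_log ha.le hdens hint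
  refine ⟨hconv, fun hV => (hV.add hconv).congr fun x _ => ?_⟩
  simp only [Pi.add_apply]
  ring

/-- If `μ₂` is a finite measure on the imaginary axis (identified with `ℝ`) with
density at most `a/π` with respect to Lebesgue measure, then
`x ↦ -a√x - U^{μ₂}(√x) = -a√x + (1/2) ∫ log(x+y²) dμ₂(y)` is convex on `(0,∞)`;
consequently if moreover `x ↦ V(√x)` is convex on `(0,∞)` then
`x ↦ V(√x) - a√x - U^{μ₂}(√x)` is convex on `(0,∞)`. -/
theorem external_field_convex (a : ℝ) (ha : 0 < a)
    (μ₂ : Measure ℝ) [IsFiniteMeasure μ₂]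
    (hdens : μ₂ ≤ ENNReal.ofReal (a / π) • volume)
    (hint : ∀ x : ℝ, 0 < x → Integrable (fun y => Real.log (x + y ^ 2)) μ₂)
    (V : ℝ → ℝ) :
    ConvexOn ℝ (Set.Ioi 0)
      (fun x => -a * Real.sqrt x + (1 / 2) * ∫ y, Real.log (x + y ^ 2) ∂μ₂)
    ∧ (ConvexOn ℝ (Set.Ioi 0) (fun x => V (Real.sqrt x)) →
        ConvexOn ℝ (Set.Ioi 0)
          (fun x => V (Real.sqrt x) - a * Real.sqrt x
              + (1 / 2) * ∫ y, Real.log (x + y ^ 2) ∂μ₂)) :=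
  external_field_convex_general a ha μ₂ hdens hint V
end

section
/- Consider the degree-5 polynomial D₅(y) in y obtained from the degree-10 factor of the α = 0 discriminant via substitution y = z² (so that the discriminant equals z² D₅(z²)). Its leading coefficient is 4a² and constant term is -27β². If D₅ has roots b₁², b₂², -c² (with b₁, b₂, c real positive) and a double real root d, then the product of the roots -b₁²b₂²c²d² equals 27β²/(4a²) ≥ 0, which forces β = 0 and d = 0. -/
/-- If the quintic `D₅(y)` (obtained from the `α = 0` discriminant by the
substitution `y = z²`) factors as `4a²(y - b₁²)(y - b₂²)(y + c²)(y - d)²` with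
`a, b₁, b₂, c > 0` and `d` real, then `β = 0` and `d = 0`. -/
theorem double_root_forces_beta_zero (t a β b₁ b₂ c d : ℝ)
    (ha : 0 < a) (hb₁ : 0 < b₁) (hb₂ : 0 < b₂) (hc : 0 < c)
    (hfact : ∀ y : ℝ,
        4 * a ^ 2 * y ^ 5 - (-4 * β + 12 * a ^ 2 * t - 1) * y ^ 4
          - (18 * a ^ 2 - 12 * t ^ 2 * a ^ 2 + 2 * t + 12 * t * β) * y ^ 3
          - (4 - 12 * t ^ 2 * β - t ^ 2 + 18 * β - 18 * a ^ 2 * t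
              + 4 * t ^ 3 * a ^ 2 + 27 * a ^ 4) * y ^ 2
          - (54 * a ^ 2 * β - 18 * t * β + 4 * t ^ 3 * β) * y
          - 27 * β ^ 2
        = 4 * a ^ 2 * (y - b₁ ^ 2) * (y - b₂ ^ 2) * (y + c ^ 2) * (y - d) ^ 2) :
    β = 0 ∧ d = 0 := by
  have h0 := hfact 0
  have key : 27 * β ^ 2 + 4 * a ^ 2 * b₁ ^ 2 * b₂ ^ 2 * c ^ 2 * d ^ 2 = 0 := by
    nlinarith [h0]
  have hβ : β = 0 := by nlinarith [sq_nonneg β, sq_nonneg (a*b₁*b₂*c*d), mul_pos ha hb₁]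
  have hd : d = 0 := by
    have hpos : 0 < 4 * a ^ 2 * b₁ ^ 2 * b₂ ^ 2 * c ^ 2 := by positivity
    have : 4 * a ^ 2 * b₁ ^ 2 * b₂ ^ 2 * c ^ 2 * d ^ 2 = 0 := by
      nlinarith [sq_nonneg β]
    have hd2 : d ^ 2 = 0 := by
      rcases mul_eq_zero.mp this with h | h
      · exact absurd h (ne_of_gt hpos)
      · exact h
    exact pow_eq_zero_iff (n := 2) (by norm_num) |>.mp hd2
  exact ⟨hβ, hd⟩
end

section
/- For t ≥ √3, the quantity A₁ = t/3 - (2/27)(t³ - (t² - 3)^{3/2}) is strictly positive; for √3 ≤ t < 2, A₂ = t/3 - (2/27)(t³ + (t²-3)^{3/2}) satisfies 0 < A₂ ≤ A₁, with A₂ = 0 at t = 2. -/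
/-- The branch `A₁ = t/3 - (2/27)(t³ - (t² - 3)^{3/2})`. -/
noncomputable def A₁ (t : ℝ) : ℝ := t / 3 - (2 / 27) * (t ^ 3 - (t ^ 2 - 3) ^ ((3 : ℝ) / 2))

/-- The branch `A₂ = t/3 - (2/27)(t³ + (t² - 3)^{3/2})`. -/
noncomputable def A₂ (t : ℝ) : ℝ := t / 3 - (2 / 27) * (t ^ 3 + (t ^ 2 - 3) ^ ((3 : ℝ) / 2))

lemma rpow_three_half (x : ℝ) (hx : 0 ≤ x) : x ^ ((3 : ℝ) / 2) = Real.sqrt x ^ 3 := by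
  rw [show (3 : ℝ) / 2 = (1 / 2) * 3 by ring, Real.rpow_mul hx,
    show ((3 : ℝ) : ℝ) = ((3 : ℕ) : ℝ) by norm_num, Real.rpow_natCast,
    ← Real.sqrt_eq_rpow]

/-- For `t ≥ √3` the quantity `A₁` is strictly positive; for `√3 ≤ t < 2` we have
`0 < A₂ ≤ A₁`; and `A₂ = 0` at `t = 2`. -/
theorem branches_positive :
    (∀ t : ℝ, Real.sqrt 3 ≤ t → 0 < A₁ t)
    ∧ (∀ t : ℝ, Real.sqrt 3 ≤ t → t < 2 → 0 < A₂ t ∧ A₂ t ≤ A₁ t)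
    ∧ A₂ 2 = 0 := by
  have sqrt3 : (Real.sqrt 3) ^ 2 = 3 := Real.sq_sqrt (by norm_num)
  have basic : ∀ t : ℝ, Real.sqrt 3 ≤ t → 0 ≤ t ∧ 3 ≤ t ^ 2 := by
    intro t ht
    have h0 : (0:ℝ) ≤ Real.sqrt 3 := Real.sqrt_nonneg 3
    have ht0 : 0 ≤ t := le_trans h0 ht
    constructor
    · exact ht0
    · nlinarith [sq_nonneg (t - Real.sqrt 3)]
  refine ⟨?_, ?_, ?_⟩
  · intro t ht
    obtain ⟨ht0, ht3⟩ := basic t ht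
    have hx : (0:ℝ) ≤ t ^ 2 - 3 := by linarith
    set u := Real.sqrt (t ^ 2 - 3) with hu
    have hu0 : 0 ≤ u := Real.sqrt_nonneg _
    have hu2 : u ^ 2 = t ^ 2 - 3 := Real.sq_sqrt hx
    have hrw : (t ^ 2 - 3) ^ ((3 : ℝ) / 2) = u ^ 3 := rpow_three_half _ hx
    unfold A₁
    rw [hrw]
    -- need 9t - 2t³ + 2u³ > 0
    rcases le_or_gt (2 * t ^ 3 - 9 * t) 0 with h | h
    · rcases eq_or_lt_of_le h with he | h
      · -- 2t³ = 9t, so t = 3/√2, u³ > 0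
        have ht2 : t ^ 2 = 9 / 2 := by
          have ht0' : 0 < t := lt_of_lt_of_le (by positivity) ht
          nlinarith
        have hupos : 0 < u := Real.sqrt_pos.mpr (by nlinarith)
        nlinarith [pow_pos hupos 3]
      · nlinarith [pow_nonneg hu0 3]
    · -- t > 3/√2, so t² > 4, so 4u⁶ > (2t³-9t)²
      have ht4 : 4 < t ^ 2 := by nlinarith
      have key : (2 * t ^ 3 - 9 * t) ^ 2 < (2 * u ^ 3) ^ 2 := by
        have : (2 * u ^ 3) ^ 2 = 4 * (t ^ 2 - 3) ^ 3 := by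
          rw [show (2 * u ^ 3) ^ 2 = 4 * (u ^ 2) ^ 3 by ring, hu2]
        nlinarith
      have h2 : 2 * t ^ 3 - 9 * t < 2 * u ^ 3 :=
        lt_of_pow_lt_pow_left₀ 2 (by positivity) key
      linarith
  · intro t ht ht2
    obtain ⟨ht0, ht3⟩ := basic t ht
    have hx : (0:ℝ) ≤ t ^ 2 - 3 := by linarith
    set u := Real.sqrt (t ^ 2 - 3) with hu
    have hu0 : 0 ≤ u := Real.sqrt_nonneg _
    have hu2 : u ^ 2 = t ^ 2 - 3 := Real.sq_sqrt hx
    have hrw : (t ^ 2 - 3) ^ ((3 : ℝ) / 2) = u ^ 3 := rpow_three_half _ hx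
    have hu6 : (2 * u ^ 3) ^ 2 = 4 * (t ^ 2 - 3) ^ 3 := by
      rw [show (2 * u ^ 3) ^ 2 = 4 * (u ^ 2) ^ 3 by ring, hu2]
    constructor
    · unfold A₂
      rw [hrw]
      -- need 9t - 2t³ - 2u³ > 0; (9t-2t³)² - 4u⁶ = 27(4-t²) > 0 and 9t-2t³ > 0
      have hpos : 0 < 9 * t - 2 * t ^ 3 := by nlinarith
      have key : (2 * u ^ 3) ^ 2 < (9 * t - 2 * t ^ 3) ^ 2 := by
        rw [hu6]; nlinarith
      nlinarith [pow_nonneg hu0 3]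
    · unfold A₁ A₂
      rw [hrw]
      nlinarith [pow_nonneg hu0 3]
  · unfold A₂
    norm_num [Real.one_rpow]
end
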